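/- arXiv:1704.05998 — 4 statements merged into one kernel-verified Lean document; each statement's English description precedes it below -/
import Mathlib

section
/- Let n ≥ 1, let R be an n×n real upper triangular matrix with positive diagonal entries r_11,…,r_nn, let σ > 0, and let B = {x ∈ ℤⁿ : ℓ ≤ x ≤ u} with ℓ, u ∈ ℤⁿ and ℓ_i < u_i for all i. Fix a deterministic x̂ ∈ B, let ṽ be an ℝⁿ-valued random vector with distribution N(0, σ²Iₙ), and set d = x̂ + R⁻¹ṽ. Define the box-constrained rounding detector componentwise by x_i^BR = ℓ_i if ⌊d_i⌉ ≤ ℓ_i, x_i^BR = ⌊d_i⌉ if ℓ_i < ⌊d_i⌉ < u_i, and x_i^BR = u_i if ⌊d_i⌉ ≥ u_i, where ⌊·⌉ denotes rounding to the nearest integer (ties broken toward smaller magnitude). Then the success probability satisfies Pr(x^BR = x̂) = det(R)/(2πσ²)^{n/2} · ∫_{I_n}⋯∫_{I_1} exp(−‖Rξ‖²/(2σ²)) dξ_1⋯dξ_n, where I_i = (−∞, 1/2] if x̂_i = ℓ_i, I_i = [−1/2, 1/2] if ℓ_i < x̂_i < u_i, and I_i = [−1/2, ∞) if x̂_i =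 u_i. -/
open MeasureTheory ProbabilityTheory Matrix
open scoped ENNReal NNReal

/-- Nearest integer rounding, with ties broken toward the integer of smaller magnitude. -/
noncomputable def nround (x : ℝ) : ℤ :=
  if 0 ≤ x then ⌈x - 1 / 2⌉ else ⌊x + 1 / 2⌋

/-- Clamp the nearest integer of `c` to the interval `[a, b]`:
`a` if `⌊c⌉ ≤ a`, `b` if `⌊c⌉ ≥ b`, and `⌊c⌉` otherwise. -/
noncomputable def clampInt (a b : ℤ) (c : ℝ) : ℤ :=
  if nround c ≤ a then a
  else if b ≤ nround c then b
  else nround c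

/-- The box-constrained rounding detector computed from `d`. -/
noncomputable def roundDetector {n : ℕ} (l u : Fin n → ℤ) (d : Fin n → ℝ) : Fin n → ℤ :=
  fun i => clampInt (l i) (u i) (d i)

/-- Auxiliary recursion for the box-constrained Babai detector: `babaiAux R l u y k`
has the correct Babai values at indices `i` with `i + k ≥ n` (computed from the last
index downwards). -/
noncomputable def babaiAux {n : ℕ} (R : Matrix (Fin n) (Fin n) ℝ) (l u : Fin n → ℤ)
    (y : Fin n → ℝ) : ℕ → Fin n → ℤ
  | 0 => fun _ => 0
  | k + 1 => fun i =>
      if i.val + (k + 1) = n then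
        clampInt (l i) (u i)
          ((y i - ∑ j : Fin n, if i < j then R i j * (babaiAux R l u y k j : ℝ) else 0) / R i i)
      else babaiAux R l u y k i

/-- The box-constrained Babai detector computed from `y`, for upper triangular `R`:
for `i = n, …, 1`, `c_i = (y_i - ∑_{j>i} r_{ij} x_j^BB)/r_{ii}` and `x_i^BB` is `⌊c_i⌉`
clamped to `[l_i, u_i]`. -/
noncomputable def babaiDetector {n : ℕ} (R : Matrix (Fin n) (Fin n) ℝ) (l u : Fin n → ℤ)
    (y : Fin n → ℝ) : Fin n → ℤ :=
  babaiAux R l u y n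

/-- `phi σ ζ = (2/√(2π)) ∫_0^{ζ/(2σ)} exp(-t²/2) dt`. -/
noncomputable def phi (σ ζ : ℝ) : ℝ :=
  2 / Real.sqrt (2 * Real.pi) * ∫ t in (0:ℝ)..(ζ / (2 * σ)), Real.exp (-(t ^ 2) / 2)

/-! Writing `ξ = R⁻¹ ṽ`, the detector returns `x̂` exactly when `⌊x̂ᵢ + ξᵢ⌉` clamped to `[ℓᵢ, uᵢ]`
equals `x̂ᵢ` for every `i`. This is a box condition on `ξ` which agrees with `ξ ∈ I₁ × ⋯ × Iₙ`
off the hyperplanes `ξᵢ = ±1/2`, and these are null for the law of `ξ`. The substitution `ṽ = Rξ`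
in the product Gaussian density shows that `ξ` has density
`det R · (2πσ²)^(-n/2) · exp (-‖Rξ‖² / (2σ²))`; integrating it over the box gives the formula. -/

theorem nround_le_of_lt_add_half {x : ℝ} {m : ℤ} (h : x < m + 1 / 2) : nround x ≤ m := by
  unfold nround
  split_ifs
  · exact Int.ceil_le.mpr (by linarith)
  · have : ⌊x + 1 / 2⌋ < m + 1 := Int.floor_lt.mpr (by push_cast; linarith)
    omega

theorem le_add_half_of_nround_le {x : ℝ} {m : ℤ} (h : nround x ≤ m) : x ≤ m + 1 / 2 := by
  unfold nround at h
  split_ifs at h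
  · have : ((⌈x - 1 / 2⌉ : ℤ) : ℝ) ≤ m := by exact_mod_cast h
    linarith [Int.le_ceil (x - 1 / 2)]
  · have : ((⌊x + 1 / 2⌋ : ℤ) : ℝ) ≤ m := by exact_mod_cast h
    linarith [Int.lt_floor_add_one (x + 1 / 2)]

theorem le_nround_of_sub_half_lt {x : ℝ} {m : ℤ} (h : m - 1 / 2 < x) : m ≤ nround x := by
  unfold nround
  split_ifs
  · have : m - 1 < ⌈x - 1 / 2⌉ := Int.lt_ceil.mpr (by push_cast; linarith)
    omega
  · exact Int.le_floor.mpr (by linarith)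

theorem sub_half_le_of_le_nround {x : ℝ} {m : ℤ} (h : m ≤ nround x) : m - 1 / 2 ≤ x := by
  unfold nround at h
  split_ifs at h
  · have : (m : ℝ) ≤ ⌈x - 1 / 2⌉ := by exact_mod_cast h
    linarith [Int.ceil_lt_add_one (x - 1 / 2)]
  · have : (m : ℝ) ≤ ⌊x + 1 / 2⌋ := by exact_mod_cast h
    linarith [Int.floor_le (x + 1 / 2)]

theorem measurable_nround : Measurable nround :=
  Measurable.ite measurableSet_Ici (by fun_prop) (by fun_prop)

theorem measurable_clampInt (a b : ℤ) : Measurable (clampInt a b) :=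
  (measurable_of_countable fun k : ℤ => if k ≤ a then a else if b ≤ k then b else k).comp
    measurable_nround

section clampInt

variable {a b m : ℤ} {c : ℝ}

theorem clampInt_eq_left_iff (hab : a < b) : clampInt a b c = a ↔ nround c ≤ a := by
  unfold clampInt
  split_ifs <;> omega

theorem clampInt_eq_right_iff (hab : a < b) : clampInt a b c = b ↔ b ≤ nround c := by
  unfold clampInt
  split_ifs <;> omega

theorem clampInt_eq_iff_of_lt_of_lt (ha : a < m) (hb : m < b) :
    clampInt a b c = m ↔ nround c = m := by
  unfold clampInt
  split_ifs <;> omega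

end clampInt

def clampSuccessInterval (a b m : ℤ) : Set ℝ :=
  if m = a then Set.Iic (1 / 2)
  else if m = b then Set.Ici (-(1 / 2))
  else Set.Icc (-(1 / 2)) (1 / 2)

section clampSuccessInterval

variable {a b m : ℤ}

theorem setOf_clampInt_add_eq_subset (hab : a < b) (ham : a ≤ m) (hmb : m ≤ b) :
    {t : ℝ | clampInt a b (m + t) = m} ⊆ clampSuccessInterval a b m := by
  intro t (ht : clampInt a b (m + t) = m)
  unfold clampSuccessInterval
  split_ifs with hma hmb'
  · subst hma
    have := le_add_half_of_nround_le ((clampInt_eq_left_iff hab).mp ht)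
    exact Set.mem_Iic.mpr (by linarith)
  · subst hmb'
    have := sub_half_le_of_le_nround ((clampInt_eq_right_iff hab).mp ht)
    exact Set.mem_Ici.mpr (by linarith)
  · have hround := (clampInt_eq_iff_of_lt_of_lt (by omega) (by omega)).mp ht
    have := le_add_half_of_nround_le hround.le
    have := sub_half_le_of_le_nround hround.ge
    exact ⟨by linarith, by linarith⟩

theorem clampSuccessInterval_diff_subset (hab : a < b) (ham : a ≤ m) (hmb : m ≤ b) :
    clampSuccessInterval a b m \ {-(1 / 2), 1 / 2} ⊆ {t : ℝ | clampInt a b (m + t) = m} := by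
  rintro t ⟨ht, hne⟩
  simp only [Set.mem_insert_iff, Set.mem_singleton_iff, not_or] at hne
  show clampInt a b (m + t) = m
  unfold clampSuccessInterval at ht
  split_ifs at ht with hma hmb'
  · subst hma
    exact (clampInt_eq_left_iff hab).mpr
      (nround_le_of_lt_add_half (by linarith [lt_of_le_of_ne ht hne.2]))
  · subst hmb'
    exact (clampInt_eq_right_iff hab).mpr
      (le_nround_of_sub_half_lt (by linarith [lt_of_le_of_ne' ht hne.1]))
  · refine (clampInt_eq_iff_of_lt_of_lt (by omega) (by omega)).mpr (le_antisymm ?_ ?_)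
    · exact nround_le_of_lt_add_half (by linarith [lt_of_le_of_ne ht.2 hne.2])
    · exact le_nround_of_sub_half_lt (by linarith [lt_of_le_of_ne' ht.1 hne.1])

theorem setOf_clampInt_add_eq_ae_eq (hab : a < b) (ham : a ≤ m) (hmb : m ≤ b) :
    {t : ℝ | clampInt a b (m + t) = m} =ᵐ[volume] clampSuccessInterval a b m := by
  refine ae_eq_set.mpr ⟨?_, ?_⟩
  · rw [Set.sdiff_eq_empty.mpr (setOf_clampInt_add_eq_subset hab ham hmb), measure_empty]
  · refine measure_mono_null (fun t ht => ?_) ((Set.toFinite {-(1 / 2 : ℝ), 1 / 2}).measure_zero _)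
    by_contra hne
    exact ht.2 (clampSuccessInterval_diff_subset hab ham hmb ⟨ht.1, hne⟩)

end clampSuccessInterval

theorem setOf_roundDetector_add_eq_ae_eq {n : ℕ} {l u xhat : Fin n → ℤ} (hlu : ∀ i, l i < u i)
    (hxl : ∀ i, l i ≤ xhat i) (hxu : ∀ i, xhat i ≤ u i) :
    {ξ : Fin n → ℝ | roundDetector l u (fun i => (xhat i : ℝ) + ξ i) = xhat}
      =ᵐ[volume] Set.univ.pi fun i => clampSuccessInterval (l i) (u i) (xhat i) := by
  have hpi : {ξ : Fin n → ℝ | roundDetector l u (fun i => (xhat i : ℝ) + ξ i) = xhat}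
      = Set.univ.pi fun i => {t : ℝ | clampInt (l i) (u i) (xhat i + t) = xhat i} := by
    ext ξ
    simp [roundDetector, funext_iff]
  rw [hpi, volume_pi]
  exact Measure.ae_eq_set_pi fun i _ => setOf_clampInt_add_eq_ae_eq (hlu i) (hxl i) (hxu i)

theorem MeasureTheory.Measure.pi_withDensity_ofReal {ι α : Type*} [Fintype ι] [MeasurableSpace α]
    {μ : Measure α} [SigmaFinite μ] {f : ι → α → ℝ} (hf : ∀ i, Integrable (f i) μ)
    (hf_nonneg : ∀ i x, 0 ≤ f i x) :
    Measure.pi (fun i => μ.withDensity fun x => ENNReal.ofReal (f i x))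
      = (Measure.pi fun _ : ι => μ).withDensity fun x => ENNReal.ofReal (∏ i, f i (x i)) := by
  have : ∀ i, IsFiniteMeasure (μ.withDensity fun x => ENNReal.ofReal (f i x)) :=
    fun i => isFiniteMeasure_withDensity_ofReal (hf i).hasFiniteIntegral
  refine Measure.pi_eq fun s hs => ?_
  have hprod_nonneg : ∀ x : ι → α, 0 ≤ ∏ i, f i (x i) :=
    fun x => Finset.prod_nonneg fun i _ => hf_nonneg i _
  rw [withDensity_apply _ (MeasurableSet.univ_pi hs), Measure.restrict_pi_pi,
    ← ofReal_integral_eq_lintegral_ofReal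
      (Integrable.fintype_prod fun i => (hf i).restrict) (ae_of_all _ hprod_nonneg),
    integral_fintype_prod_eq_prod,
    ENNReal.ofReal_prod_of_nonneg fun i _ => integral_nonneg fun x => hf_nonneg i x]
  refine Finset.prod_congr rfl fun i _ => ?_
  rw [withDensity_apply _ (hs i),
    ofReal_integral_eq_lintegral_ofReal (hf i).restrict (ae_of_all _ (hf_nonneg i))]

theorem pi_gaussianReal_eq_withDensity {ι : Type*} [Fintype ι] (μ : ℝ) {v : ℝ≥0} (hv : v ≠ 0) :
    Measure.pi (fun _ : ι => gaussianReal μ v)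
      = volume.withDensity fun x => ENNReal.ofReal (∏ i, gaussianPDFReal μ v (x i)) := by
  simp only [gaussianReal_of_var_ne_zero μ hv, gaussianPDF_def]
  exact Measure.pi_withDensity_ofReal (fun _ => integrable_gaussianPDFReal μ v)
    (fun _ => gaussianPDFReal_nonneg μ v)

theorem prod_gaussianPDFReal_zero {ι : Type*} [Fintype ι] (v : ℝ≥0) (x : ι → ℝ) :
    ∏ i, gaussianPDFReal 0 v (x i)
      = ((2 * Real.pi * v) ^ ((Fintype.card ι : ℝ) / 2))⁻¹
          * Real.exp (-(∑ i, x i ^ 2) / (2 * v)) := by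
  simp only [gaussianPDFReal, sub_zero]
  rw [Finset.prod_mul_distrib, Finset.prod_const, Finset.card_univ, ← Real.exp_sum, inv_pow,
    Real.sqrt_eq_rpow, ← Real.rpow_natCast, ← Real.rpow_mul (by positivity), neg_div,
    Finset.sum_div, ← Finset.sum_neg_distrib, mul_comm (1 / 2 : ℝ), ← div_eq_mul_one_div]
  simp only [neg_div]

theorem map_inv_mulVec_volume_withDensity {ι : Type*} [Fintype ι] [DecidableEq ι]
    {A : Matrix ι ι ℝ} (hA : A.det ≠ 0) {ρ : (ι → ℝ) → ℝ≥0∞} (hρ : Measurable ρ) :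
    Measure.map (fun y => A⁻¹ *ᵥ y) (volume.withDensity ρ)
      = volume.withDensity fun ξ => ENNReal.ofReal |A.det| * ρ (A *ᵥ ξ) := by
  have hmeas : ∀ B : Matrix ι ι ℝ, Measurable fun y : ι → ℝ => B *ᵥ y :=
    fun B => (Matrix.toLin' B).continuous_of_finiteDimensional.measurable
  have hmapA : Measure.map (fun ξ => A *ᵥ ξ) volume = ENNReal.ofReal |A.det⁻¹| • volume :=
    Real.map_matrix_volume_pi_eq_smul_volume_pi hA
  ext S hS
  have hpre : (fun ξ => A *ᵥ ξ) ⁻¹' ((fun y => A⁻¹ *ᵥ y) ⁻¹' S) = S := by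
    ext ξ
    simp [Matrix.mulVec_mulVec, Matrix.nonsing_inv_mul _ (isUnit_iff_ne_zero.mpr hA)]
  have hcomp : ∫⁻ ξ in S, ρ (A *ᵥ ξ)
      = ENNReal.ofReal |A.det⁻¹| * ∫⁻ y in (fun y => A⁻¹ *ᵥ y) ⁻¹' S, ρ y := by
    rw [← smul_eq_mul, ← lintegral_smul_measure, ← Measure.restrict_smul, ← hmapA,
      setLIntegral_map ((hmeas _) hS) hρ (hmeas A), hpre]
  rw [Measure.map_apply (hmeas _) hS, withDensity_apply _ ((hmeas _) hS), withDensity_apply _ hS,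
    lintegral_const_mul (f := fun ξ => ρ (A *ᵥ ξ)) _ (hρ.comp (hmeas A)), hcomp, ← mul_assoc,
    ← ENNReal.ofReal_mul (abs_nonneg _), ← abs_mul, mul_inv_cancel₀ hA, abs_one,
    ENNReal.ofReal_one, one_mul]

theorem map_inv_mulVec_pi_gaussianReal {ι : Type*} [Fintype ι] [DecidableEq ι]
    {A : Matrix ι ι ℝ} (hA : A.det ≠ 0) {v : ℝ≥0} (hv : v ≠ 0) :
    Measure.map (fun y => A⁻¹ *ᵥ y) (Measure.pi fun _ : ι => gaussianReal 0 v)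
      = volume.withDensity fun ξ => ENNReal.ofReal (|A.det| / (2 * Real.pi * v) ^
          ((Fintype.card ι : ℝ) / 2) * Real.exp (-(∑ j, (A *ᵥ ξ) j ^ 2) / (2 * v))) := by
  rw [pi_gaussianReal_eq_withDensity 0 hv, map_inv_mulVec_volume_withDensity hA (by fun_prop)]
  congr with ξ
  rw [← ENNReal.ofReal_mul (abs_nonneg _), prod_gaussianPDFReal_zero]
  ring_nf

theorem success_prob_boxRounding_deterministic_general
    {n : ℕ}
    (R : Matrix (Fin n) (Fin n) ℝ)
    (hupper : ∀ i j : Fin n, j < i → R i j = 0)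
    (hdiag : ∀ i : Fin n, 0 < R i i)
    (σ : ℝ) (hσ : 0 < σ)
    (l u : Fin n → ℤ) (hlu : ∀ i, l i < u i)
    (xhat : Fin n → ℤ) (hxl : ∀ i, l i ≤ xhat i) (hxu : ∀ i, xhat i ≤ u i)
    {Ω : Type} [MeasurableSpace Ω] (P : Measure Ω)
    (v : Ω → Fin n → ℝ) (hmv : Measurable v)
    (hv : Measure.map v P = Measure.pi fun _ : Fin n => gaussianReal 0 ⟨σ ^ 2, sq_nonneg σ⟩) :
    (P {ω | roundDetector l u (fun i => (xhat i : ℝ) + (R⁻¹ *ᵥ v ω) i) = xhat}).toReal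
      = R.det / (2 * Real.pi * σ ^ 2) ^ ((n : ℝ) / 2) *
        ∫ ξ in Set.univ.pi (fun i =>
            if xhat i = l i then Set.Iic (1 / 2 : ℝ)
            else if xhat i = u i then Set.Ici (-(1 / 2) : ℝ)
            else Set.Icc (-(1 / 2) : ℝ) (1 / 2)),
          Real.exp (-(∑ j, ((R *ᵥ ξ) j) ^ 2) / (2 * σ ^ 2)) := by
  have hdet : 0 < R.det := by
    rw [Matrix.det_of_isUpperTriangular hupper]
    exact Finset.prod_pos fun i _ => hdiag i
  set S := {ξ : Fin n → ℝ | roundDetector l u (fun i => (xhat i : ℝ) + ξ i) = xhat}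
  have hS : MeasurableSet S :=
    (measurable_pi_lambda _ fun i => (measurable_clampInt _ _).comp
      (measurable_const.add (measurable_pi_apply i))) (measurableSet_singleton xhat)
  have hW : Measurable fun y : Fin n → ℝ => R⁻¹ *ᵥ y :=
    (Matrix.toLin' R⁻¹).continuous_of_finiteDimensional.measurable
  have hP : P {ω | roundDetector l u (fun i => (xhat i : ℝ) + (R⁻¹ *ᵥ v ω) i) = xhat}
      = Measure.map (fun y => R⁻¹ *ᵥ y) (Measure.map v P) S := by
    rw [Measure.map_apply hW hS, Measure.map_apply hmv (hW hS)]
    rfl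
  have hvar : (⟨σ ^ 2, sq_nonneg σ⟩ : ℝ≥0) ≠ 0 := ne_of_gt (pow_pos hσ 2)
  rw [hP, hv, map_inv_mulVec_pi_gaussianReal hdet.ne' hvar, withDensity_apply _ hS,
    setLIntegral_congr (setOf_roundDetector_add_eq_ae_eq hlu hxl hxu), ← integral_const_mul,
    integral_eq_lintegral_of_nonneg_ae (ae_of_all _ fun ξ => by positivity) (by fun_prop),
    abs_of_pos hdet, Fintype.card_fin]
  rfl

/-- Success probability of the box-constrained rounding detector for a deterministic
parameter `x̂ ∈ B` (Theorem 1 of the paper). -/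
theorem success_prob_boxRounding_deterministic
    {n : ℕ} (hn : 1 ≤ n)
    (R : Matrix (Fin n) (Fin n) ℝ)
    (hupper : ∀ i j : Fin n, j < i → R i j = 0)
    (hdiag : ∀ i : Fin n, 0 < R i i)
    (σ : ℝ) (hσ : 0 < σ)
    (l u : Fin n → ℤ) (hlu : ∀ i, l i < u i)
    (xhat : Fin n → ℤ) (hxl : ∀ i, l i ≤ xhat i) (hxu : ∀ i, xhat i ≤ u i)
    {Ω : Type} [MeasurableSpace Ω] (P : Measure Ω) [IsProbabilityMeasure P]
    (v : Ω → Fin n → ℝ) (hmv : Measurable v)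
    (hv : Measure.map v P = Measure.pi fun _ : Fin n => gaussianReal 0 ⟨σ ^ 2, sq_nonneg σ⟩) :
    (P {ω | roundDetector l u (fun i => (xhat i : ℝ) + (R⁻¹ *ᵥ v ω) i) = xhat}).toReal
      = R.det / (2 * Real.pi * σ ^ 2) ^ ((n : ℝ) / 2) *
        ∫ ξ in Set.univ.pi (fun i =>
            if xhat i = l i then Set.Iic (1 / 2 : ℝ)
            else if xhat i = u i then Set.Ici (-(1 / 2) : ℝ)
            else Set.Icc (-(1 / 2) : ℝ) (1 / 2)),
          Real.exp (-(∑ j, ((R *ᵥ ξ) j) ^ 2) / (2 * σ ^ 2)) :=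
  success_prob_boxRounding_deterministic_general R hupper hdiag σ hσ l u hlu xhat hxl hxu P v hmv hv
end

section
/- Let n ≥ 2, let R be an n×n real upper triangular matrix with positive diagonal entries r_11,…,r_nn, let σ > 0 and a > 0, and let s_2,…,s_n ⊆ ℝ be intervals. Then ∫_{s_n}⋯∫_{s_2}∫_{−a}^{a} exp(−‖Rξ‖²/(2σ²)) dξ_1 dξ_2 ⋯ dξ_n ≤ (∫_{−a}^{a} exp(−r_11² t²/(2σ²)) dt) · ∫_{s_n}⋯∫_{s_2} exp(−‖R' ξ'‖²/(2σ²)) dξ_2 ⋯ dξ_n, where ξ = (ξ_1,…,ξ_n), ξ' = (ξ_2,…,ξ_n), and R' is the (n−1)×(n−1) trailing principal submatrix of R formed by its rows and columns 2,…,n. -/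
open MeasureTheory ProbabilityTheory Matrix
open scoped ENNReal NNReal

lemma gauss_integrable_1d {K : ℝ} (hK : 0 < K) :
    MeasureTheory.Integrable (fun x : ℝ => Real.exp (-x ^ 2 / K)) := by
  have h := integrable_exp_neg_mul_sq (show (0:ℝ) < K⁻¹ by positivity)
  refine h.congr ?_
  filter_upwards with x
  congr 1
  ring

lemma gauss_shift_le {k L : ℝ} (hk : 0 < k) (hL : 0 ≤ L) (c : ℝ) :
    (∫ u in (-L)..L, Real.exp (-(u + c) ^ 2 / k)) ≤ ∫ u in (-L)..L, Real.exp (-u ^ 2 / k) := by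
  have hint : MeasureTheory.Integrable (fun x : ℝ => Real.exp (-x ^ 2 / k)) :=
    gauss_integrable_1d hk
  have hii : ∀ p q : ℝ, IntervalIntegrable (fun x : ℝ => Real.exp (-x ^ 2 / k)) volume p q :=
    fun p q => hint.intervalIntegrable
  have main : ∀ d : ℝ, 0 ≤ d →
      (∫ u in (-L + d)..(L + d), Real.exp (-u ^ 2 / k)) ≤
        ∫ u in (-L)..L, Real.exp (-u ^ 2 / k) := by
    intro d hd
    have h1 : (∫ u in (-L)..(-L + d), Real.exp (-u ^ 2 / k)) +
        ∫ u in (-L + d)..(L + d), Real.exp (-u ^ 2 / k)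
        = ∫ u in (-L)..(L + d), Real.exp (-u ^ 2 / k) :=
      intervalIntegral.integral_add_adjacent_intervals (hii _ _) (hii _ _)
    have h2 : (∫ u in (-L)..L, Real.exp (-u ^ 2 / k)) +
        ∫ u in L..(L + d), Real.exp (-u ^ 2 / k)
        = ∫ u in (-L)..(L + d), Real.exp (-u ^ 2 / k) :=
      intervalIntegral.integral_add_adjacent_intervals (hii _ _) (hii _ _)
    have h4 : (∫ u in L..(L + d), Real.exp (-(u - 2 * L) ^ 2 / k)) =
        ∫ u in (-L)..(-L + d), Real.exp (-u ^ 2 / k) := by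
      have h := intervalIntegral.integral_comp_sub_right
        (a := L) (b := L + d) (fun x : ℝ => Real.exp (-x ^ 2 / k)) (2 * L)
      convert h using 2 <;> ring
    have h3 : (∫ u in L..(L + d), Real.exp (-u ^ 2 / k)) ≤
        ∫ u in (-L)..(-L + d), Real.exp (-u ^ 2 / k) := by
      rw [← h4]
      apply intervalIntegral.integral_mono_on (by linarith) (hii _ _)
      · have : MeasureTheory.Integrable (fun x : ℝ => Real.exp (-(x - 2 * L) ^ 2 / k)) := by
          have := hint.comp_sub_right (2 * L)
          exact this
        exact this.intervalIntegrable
      · intro x hx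
        apply Real.exp_le_exp.mpr
        rw [neg_div, neg_div, neg_le_neg_iff]
        have h5 : (x - 2 * L) ^ 2 ≤ x ^ 2 := by nlinarith [hx.1]
        gcongr
    linarith
  rcases le_or_gt 0 c with hc | hc
  · have hshift : (∫ u in (-L)..L, Real.exp (-(u + c) ^ 2 / k)) =
        ∫ u in (-L + c)..(L + c), Real.exp (-u ^ 2 / k) :=
      intervalIntegral.integral_comp_add_right (a := -L) (b := L)
        (fun x : ℝ => Real.exp (-x ^ 2 / k)) c
    rw [hshift]
    exact main c hc
  · have heven : (∫ u in (-L)..L, Real.exp (-(u + c) ^ 2 / k)) =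
        ∫ u in (-L)..L, Real.exp (-(u + -c) ^ 2 / k) := by
      have h := intervalIntegral.integral_comp_neg (a := -L) (b := L)
        (fun x : ℝ => Real.exp (-(x + c) ^ 2 / k))
      rw [neg_neg] at h
      rw [← h]
      congr 1
      ext x
      congr 2
      ring
    rw [heven]
    have hshift : (∫ u in (-L)..L, Real.exp (-(u + -c) ^ 2 / k)) =
        ∫ u in (-L + -c)..(L + -c), Real.exp (-u ^ 2 / k) :=
      intervalIntegral.integral_comp_add_right (a := -L) (b := L)
        (fun x : ℝ => Real.exp (-x ^ 2 / k)) (-c)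
    rw [hshift]
    exact main (-c) (by linarith)

lemma gauss_shift_le_Icc {k b a : ℝ} (hk : 0 < k) (hb : 0 < b) (ha : 0 < a) (c : ℝ) :
    (∫ t in Set.Icc (-a) a, Real.exp (-(b * t + c) ^ 2 / k)) ≤
      ∫ t in Set.Icc (-a) a, Real.exp (-(b ^ 2 * t ^ 2) / k) := by
  rw [MeasureTheory.integral_Icc_eq_integral_Ioc, MeasureTheory.integral_Icc_eq_integral_Ioc,
    ← intervalIntegral.integral_of_le (by linarith : -a ≤ a),
    ← intervalIntegral.integral_of_le (by linarith : -a ≤ a)]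
  have h1 := intervalIntegral.integral_comp_mul_left (a := -a) (b := a)
    (fun u : ℝ => Real.exp (-(u + c) ^ 2 / k)) (ne_of_gt hb)
  have h2 := intervalIntegral.integral_comp_mul_left (a := -a) (b := a)
    (fun u : ℝ => Real.exp (-u ^ 2 / k)) (ne_of_gt hb)
  have hL : b * -a = -(b * a) := by ring
  rw [hL] at h1 h2
  calc (∫ t in (-a)..a, Real.exp (-(b * t + c) ^ 2 / k))
      = b⁻¹ • ∫ u in (-(b * a))..(b * a), Real.exp (-(u + c) ^ 2 / k) := h1
    _ ≤ b⁻¹ • ∫ u in (-(b * a))..(b * a), Real.exp (-u ^ 2 / k) := by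
        rw [smul_eq_mul, smul_eq_mul]
        exact mul_le_mul_of_nonneg_left
          (gauss_shift_le hk (by positivity) c) (by positivity)
    _ = ∫ t in (-a)..a, Real.exp (-(b * t) ^ 2 / k) := by
        rw [← h2]
    _ = ∫ t in (-a)..a, Real.exp (-(b ^ 2 * t ^ 2) / k) := by
        congr 1; ext t; congr 2; ring


lemma gauss_integrable_multi {m : ℕ} (R : Matrix (Fin m) (Fin m) ℝ)
    (hupper : ∀ i j : Fin m, j < i → R i j = 0) (hdiag : ∀ i, 0 < R i i)
    {k : ℝ} (hk : 0 < k) :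
    MeasureTheory.Integrable
      (fun ξ : Fin m → ℝ => Real.exp (-(∑ j, ((R *ᵥ ξ) j) ^ 2) / k)) := by
  have hdet : IsUnit R.det := by
    rw [Matrix.det_of_upperTriangular (fun i j h => hupper i j h)]
    exact isUnit_iff_ne_zero.mpr (Finset.prod_pos (fun i _ => hdiag i)).ne'
  set B := R⁻¹ with hBdef
  have hBR : ∀ ξ : Fin m → ℝ, B *ᵥ (R *ᵥ ξ) = ξ := by
    intro ξ
    rw [Matrix.mulVec_mulVec, Matrix.nonsing_inv_mul R hdet, Matrix.one_mulVec]
  set M : ℝ := (∑ i, ∑ j, (B i j) ^ 2) + 1 with hMdef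
  have hM : 0 < M := by positivity
  have hkey : ∀ ξ : Fin m → ℝ, (∑ i, (ξ i) ^ 2) ≤ M * ∑ j, ((R *ᵥ ξ) j) ^ 2 := by
    intro ξ
    have h1 : ∀ i, (ξ i) ^ 2 ≤ (∑ j, (B i j) ^ 2) * ∑ j, ((R *ᵥ ξ) j) ^ 2 := by
      intro i
      have h2 : ξ i = ∑ j, B i j * (R *ᵥ ξ) j := by
        conv_lhs => rw [← hBR ξ]
        simp [Matrix.mulVec, dotProduct]
      rw [h2]
      exact Finset.sum_mul_sq_le_sq_mul_sq _ _ _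
    have hS : 0 ≤ ∑ j, ((R *ᵥ ξ) j) ^ 2 := Finset.sum_nonneg fun j _ => sq_nonneg _
    calc (∑ i, (ξ i) ^ 2)
        ≤ ∑ i : Fin m, ((∑ j, (B i j) ^ 2) * ∑ j, ((R *ᵥ ξ) j) ^ 2) :=
          Finset.sum_le_sum fun i _ => h1 i
      _ = (∑ i, ∑ j, (B i j) ^ 2) * ∑ j, ((R *ᵥ ξ) j) ^ 2 := by rw [← Finset.sum_mul]
      _ ≤ M * ∑ j, ((R *ᵥ ξ) j) ^ 2 := by
          apply mul_le_mul_of_nonneg_right _ hS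
          rw [hMdef]; linarith
  have hdom : MeasureTheory.Integrable
      (fun ξ : Fin m → ℝ => ∏ i, Real.exp (-(ξ i) ^ 2 / (M * k))) :=
    MeasureTheory.Integrable.fin_nat_prod
      (f := fun (_ : Fin m) (x : ℝ) => Real.exp (-x ^ 2 / (M * k)))
      (fun i => gauss_integrable_1d (by positivity))
  have hcont : Continuous
      (fun ξ : Fin m → ℝ => Real.exp (-(∑ j, ((R *ᵥ ξ) j) ^ 2) / k)) := by
    have hc : ∀ j, Continuous (fun ξ : Fin m → ℝ => (R *ᵥ ξ) j) := by
      intro j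
      simp only [Matrix.mulVec, dotProduct]
      exact continuous_finset_sum _ fun i _ => continuous_const.mul (continuous_apply i)
    exact Real.continuous_exp.comp
      (((continuous_finset_sum _ fun j _ => (hc j).pow 2).neg).div_const k)
  apply hdom.mono hcont.aestronglyMeasurable
  filter_upwards with ξ
  rw [Real.norm_eq_abs, Real.abs_exp, Real.norm_eq_abs,
    abs_of_nonneg (Finset.prod_nonneg fun i _ => (Real.exp_nonneg _)), ← Real.exp_sum]
  apply Real.exp_le_exp.mpr
  have hsum : (∑ i, -(ξ i) ^ 2 / (M * k)) = -(∑ i, (ξ i) ^ 2) / (M * k) := by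
    rw [← Finset.sum_div, ← Finset.sum_neg_distrib]
  rw [hsum, neg_div, neg_div, neg_le_neg_iff,
    div_le_div_iff₀ (by positivity) hk]
  have := mul_le_mul_of_nonneg_right (hkey ξ) hk.le
  nlinarith [this]

/-- Lemma 1 of the paper: peeling off the first coordinate of the Gaussian-type integral
over `[-a,a] × s₂ × ⋯ × sₙ` gives an upper bound by the product of the one-dimensional
integral over `[-a,a]` and the `(n-1)`-dimensional integral over `s₂ × ⋯ × sₙ`. -/
theorem gaussian_integral_peel_first_coordinate
    {n : ℕ} (hn : 1 ≤ n)
    (R : Matrix (Fin (n + 1)) (Fin (n + 1)) ℝ)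
    (hupper : ∀ i j : Fin (n + 1), j < i → R i j = 0)
    (hdiag : ∀ i : Fin (n + 1), 0 < R i i)
    (σ a : ℝ) (hσ : 0 < σ) (ha : 0 < a)
    (s : Fin n → Set ℝ) (hs : ∀ i, (s i).OrdConnected) :
    (∫ ξ in Set.univ.pi (Fin.cons (Set.Icc (-a) a) s),
        Real.exp (-(∑ j, ((R *ᵥ ξ) j) ^ 2) / (2 * σ ^ 2)))
      ≤ (∫ t in Set.Icc (-a) a, Real.exp (-(R 0 0 ^ 2 * t ^ 2) / (2 * σ ^ 2))) *
        ∫ ξ in Set.univ.pi s,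
          Real.exp (-(∑ j, ((R.submatrix Fin.succ Fin.succ *ᵥ ξ) j) ^ 2) / (2 * σ ^ 2)) := by
  set k := 2 * σ ^ 2 with hkdef
  have hk : 0 < k := by positivity
  set R' := R.submatrix Fin.succ Fin.succ with hR'def
  have hupper' : ∀ i j : Fin n, j < i → R' i j = 0 := fun i j h =>
    hupper _ _ (Fin.succ_lt_succ_iff.mpr h)
  have hdiag' : ∀ i : Fin n, 0 < R' i i := fun i => hdiag _
  have hf : Integrable (fun ξ : Fin (n + 1) → ℝ =>
      Real.exp (-(∑ j, ((R *ᵥ ξ) j) ^ 2) / k)) :=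
    gauss_integrable_multi R hupper hdiag hk
  have hg : Integrable (fun ξ : Fin n → ℝ =>
      Real.exp (-(∑ j, ((R' *ᵥ ξ) j) ^ 2) / k)) :=
    gauss_integrable_multi R' hupper' hdiag' hk
  set A := Set.Icc (-a) a with hAdef
  set Bs := Set.univ.pi s with hBdef
  set e := MeasurableEquiv.piFinSuccAbove (fun _ : Fin (n + 1) => ℝ) 0 with hedef
  set c : (Fin n → ℝ) → ℝ := fun ξ' => ∑ j, R 0 (Fin.succ j) * ξ' j with hcdef
  set F : ℝ × (Fin n → ℝ) → ℝ := fun p =>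
    Real.exp (-(R 0 0 * p.1 + c p.2) ^ 2 / k) *
      Real.exp (-(∑ j, ((R' *ᵥ p.2) j) ^ 2) / k) with hFdef
  have hcons : ∀ (t : ℝ) (ξ' : Fin n → ℝ),
      Real.exp (-(∑ j, ((R *ᵥ Fin.cons t ξ') j) ^ 2) / k) = F (t, ξ') := by
    intro t ξ'
    have h0 : (R *ᵥ Fin.cons t ξ') 0 = R 0 0 * t + c ξ' := by
      simp [Matrix.mulVec, dotProduct, Fin.sum_univ_succ, hcdef]
    have hsucc : ∀ j : Fin n, (R *ᵥ Fin.cons t ξ') (Fin.succ j) = (R' *ᵥ ξ') j := by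
      intro j
      simp [Matrix.mulVec, dotProduct, Fin.sum_univ_succ, hR'def,
        Matrix.submatrix, hupper (Fin.succ j) 0 (Fin.succ_pos j)]
    rw [Fin.sum_univ_succ, h0]
    simp only [hsucc]
    rw [show F (t, ξ') = Real.exp (-(R 0 0 * t + c ξ') ^ 2 / k) *
      Real.exp (-(∑ j, ((R' *ᵥ ξ') j) ^ 2) / k) from rfl, ← Real.exp_add]
    congr 1
    ring
  have hpre : e.symm ⁻¹' (Set.univ.pi (Fin.cons A s)) = A ×ˢ Bs := by
    ext p
    simp only [Set.mem_preimage, Set.mem_pi, Set.mem_univ, forall_true_left, Set.mem_prod,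
      hedef, MeasurableEquiv.piFinSuccAbove_symm_apply, Fin.insertNthEquiv,
      Equiv.coe_fn_mk, Fin.insertNth_zero, hBdef]
    rw [Fin.forall_fin_succ]
    simp [Fin.cons_zero, Fin.cons_succ]
  have hesymm : ∀ p : ℝ × (Fin n → ℝ), e.symm p = Fin.cons p.1 p.2 := by
    intro p
    simp [hedef, MeasurableEquiv.piFinSuccAbove_symm_apply, Fin.insertNthEquiv,
      Fin.insertNth_zero]
  have hmp : MeasurePreserving e.symm :=
    (volume_preserving_piFinSuccAbove (fun _ : Fin (n + 1) => ℝ) 0).symm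
  have hFint : Integrable F ((volume.restrict A).prod (volume.restrict Bs)) := by
    rw [Measure.prod_restrict]
    have h1 : Integrable ((fun ξ : Fin (n + 1) → ℝ =>
        Real.exp (-(∑ j, ((R *ᵥ ξ) j) ^ 2) / k)) ∘ e.symm) :=
      (hmp.integrable_comp_emb (MeasurableEquiv.measurableEmbedding _)).mpr hf
    have h2 : F = (fun ξ : Fin (n + 1) → ℝ =>
        Real.exp (-(∑ j, ((R *ᵥ ξ) j) ^ 2) / k)) ∘ e.symm := by
      funext p
      simp only [Function.comp_apply, hesymm p, hcons p.1 p.2]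
    rw [← Measure.volume_eq_prod, h2]
    exact h1.integrableOn
  have step1 : (∫ ξ in Set.univ.pi (Fin.cons A s),
      Real.exp (-(∑ j, ((R *ᵥ ξ) j) ^ 2) / k)) = ∫ p in A ×ˢ Bs, F p := by
    rw [← hmp.setIntegral_preimage_emb (MeasurableEquiv.measurableEmbedding _)
      (fun ξ => Real.exp (-(∑ j, ((R *ᵥ ξ) j) ^ 2) / k)) (Set.univ.pi (Fin.cons A s)),
      hpre]
    apply setIntegral_congr_ae (measurableSet_Icc.prod (MeasurableSet.univ_pi fun i => (hs i).measurableSet))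
    filter_upwards with p _
    rw [hesymm p, hcons p.1 p.2]
  have step2 : (∫ p in A ×ˢ Bs, F p) =
      ∫ ξ' in Bs, ∫ t in A, F (t, ξ') := by
    rw [Measure.volume_eq_prod, ← Measure.prod_restrict]
    exact integral_prod_symm _ hFint
  set K := ∫ t in A, Real.exp (-(R 0 0 ^ 2 * t ^ 2) / k) with hKdef
  have hK0 : 0 ≤ K := integral_nonneg fun t => Real.exp_nonneg _
  have step3 : (∫ ξ' in Bs, ∫ t in A, F (t, ξ')) ≤
      K * ∫ ξ' in Bs, Real.exp (-(∑ j, ((R' *ᵥ ξ') j) ^ 2) / k) := by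
    rw [← integral_const_mul]
    apply integral_mono_of_nonneg
    · filter_upwards with ξ'
      exact integral_nonneg fun t => mul_nonneg (Real.exp_nonneg _) (Real.exp_nonneg _)
    · exact (hg.integrableOn).const_mul K
    · filter_upwards with ξ'
      have hinner : (∫ t in A, F (t, ξ')) =
          (∫ t in A, Real.exp (-(R 0 0 * t + c ξ') ^ 2 / k)) *
            Real.exp (-(∑ j, ((R' *ᵥ ξ') j) ^ 2) / k) := by
        simp only [hFdef]
        exact integral_mul_const _ _
      rw [hinner]
      exact mul_le_mul_of_nonneg_right
        (gauss_shift_le_Icc hk (hdiag 0) ha (c ξ')) (Real.exp_nonneg _)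
  calc (∫ ξ in Set.univ.pi (Fin.cons A s),
      Real.exp (-(∑ j, ((R *ᵥ ξ) j) ^ 2) / k))
      = ∫ ξ' in Bs, ∫ t in A, F (t, ξ') := by rw [step1, step2]
    _ ≤ K * ∫ ξ' in Bs, Real.exp (-(∑ j, ((R' *ᵥ ξ') j) ^ 2) / k) := step3
end

section
/- Let n ≥ 1, let R be an n×n real upper triangular matrix with positive diagonal entries r_11,…,r_nn, let σ > 0, and let a_1,…,a_n > 0. Then ∫_{[−a_1,a_1]×⋯×[−a_n,a_n]} exp(−‖Rξ‖²/(2σ²)) dξ ≤ ∏_{i=1}^n ∫_{−a_i}^{a_i} exp(−r_ii² t²/(2σ²)) dt. -/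
open MeasureTheory ProbabilityTheory Matrix
open scoped ENNReal NNReal

/-!
Integrate out the coordinates one at a time, starting with `ξ 0`. Since `R` is upper
triangular, `ξ 0` occurs only in the first row, as `R 0 0 * ξ 0 + c` with `c` depending on the
other coordinates, and the remaining rows pose the same problem for the submatrix of `R`.
The Gaussian factors `g` decrease in `|x|`, and for such `g` the integral of `g (r * t + c)`
over a symmetric interval is largest at `c = 0`: shifting the window `[-b, b]` right by
`c ≥ 0` gains the mass of `g` on `[b, b + c]` and loses the pointwise larger mass on
`[-b, c - b]`.
-/

open Set intervalIntegral

theorem integral_pi_eq_integral_integral_cons {α E : Type*} [MeasurableSpace α]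
    [NormedAddCommGroup E] [NormedSpace ℝ E] {n : ℕ} (μ : Fin (n + 1) → Measure α)
    [∀ i, SigmaFinite (μ i)] {F : (Fin (n + 1) → α) → E} (hF : Integrable F (Measure.pi μ)) :
    ∫ ξ, F ξ ∂Measure.pi μ = ∫ y, ∫ x, F (Fin.cons x y) ∂μ 0 ∂Measure.pi fun j => μ j.succ := by
  have hmp := (measurePreserving_piFinSuccAbove μ 0).symm
  simp only [Fin.succAbove_zero] at hmp
  rw [← hmp.integral_comp', integral_prod_symm]
  · simp only [MeasurableEquiv.piFinSuccAbove_symm_apply, Fin.insertNthEquiv_zero,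
      Fin.consEquiv, Equiv.coe_fn_mk]
  · exact (hmp.integrable_comp_emb (MeasurableEquiv.measurableEmbedding _)).2 hF

lemma mulVec_cons_succ {α : Type*} [NonUnitalNonAssocSemiring α] {n : ℕ}
    {R : Matrix (Fin (n + 1)) (Fin (n + 1)) α} (hR : R.BlockTriangular id) (x : α)
    (y : Fin n → α) (j : Fin n) :
    (R *ᵥ Fin.cons x y) j.succ = (R.submatrix Fin.succ Fin.succ *ᵥ y) j := by
  have hzero : R j.succ 0 = 0 := hR (Fin.succ_pos j)
  simp [mulVec, dotProduct, Fin.sum_univ_succ, hzero]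

section RadiallyNonincreasing

variable {g : ℝ → ℝ} (hg_cont : Continuous g) (hg : ∀ x y, |x| ≤ |y| → g y ≤ g x)
include hg_cont hg

lemma intervalIntegral_comp_add_right_le_of_nonneg {b c : ℝ} (hb : 0 ≤ b) (hc : 0 ≤ c) :
    ∫ t in (-b)..b, g (t + c) ≤ ∫ t in (-b)..b, g t := by
  have hint : ∀ x y : ℝ, IntervalIntegrable g volume x y := hg_cont.intervalIntegrable
  have hgain_le_loss : ∫ t in b..b + c, g t ≤ ∫ t in (-b)..c - b, g t := by
    have hgain := integral_comp_add_right g b (a := 0) (b := c)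
    have hloss := integral_comp_add_right g (-b) (a := 0) (b := c)
    rw [zero_add, add_comm] at hgain
    rw [zero_add, ← sub_eq_add_neg] at hloss
    rw [← hgain, ← hloss]
    refine integral_mono_on hc ((hg_cont.comp (continuous_add_const b)).intervalIntegrable _ _)
      ((hg_cont.comp (continuous_add_const (-b))).intervalIntegrable _ _) fun t ht => hg _ _ ?_
    rw [abs_of_nonneg (by linarith [ht.1] : 0 ≤ t + b), abs_le]
    constructor <;> linarith [ht.1]
  rw [integral_comp_add_right, neg_add_eq_sub]
  have := integral_add_adjacent_intervals (hint (-b) b) (hint b (b + c))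
  have := integral_add_adjacent_intervals (hint (-b) (c - b)) (hint (c - b) (b + c))
  linarith

lemma intervalIntegral_comp_add_right_le {b : ℝ} (hb : 0 ≤ b) (c : ℝ) :
    ∫ t in (-b)..b, g (t + c) ≤ ∫ t in (-b)..b, g t := by
  rcases le_total 0 c with hc | hc
  · exact intervalIntegral_comp_add_right_le_of_nonneg hg_cont hg hb hc
  have heven : ∀ t, g (-t + c) = g (t + -c) := fun t => by
    rw [show -t + c = -(t + -c) by ring]
    exact le_antisymm (hg _ _ (abs_neg _).ge) (hg _ _ (abs_neg _).le)
  calc ∫ t in (-b)..b, g (t + c) = ∫ t in (-b)..b, g (-t + c) := by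
        rw [integral_comp_neg (fun t => g (t + c)), neg_neg]
    _ = ∫ t in (-b)..b, g (t + -c) := by simp_rw [heven]
    _ ≤ ∫ t in (-b)..b, g t :=
        intervalIntegral_comp_add_right_le_of_nonneg hg_cont hg hb (neg_nonneg.2 hc)

lemma setIntegral_Icc_comp_add_right_le (a c : ℝ) :
    ∫ t in Icc (-a) a, g (t + c) ≤ ∫ t in Icc (-a) a, g t := by
  rcases lt_or_ge a 0 with ha | ha
  · simp [Icc_eq_empty (by linarith : ¬-a ≤ a)]
  rw [integral_Icc_eq_integral_Ioc, integral_Icc_eq_integral_Ioc,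
    ← integral_of_le (by linarith), ← integral_of_le (by linarith)]
  exact intervalIntegral_comp_add_right_le hg_cont hg ha c

lemma setIntegral_Icc_comp_mul_add_le {r : ℝ} (hr : r ≠ 0) (a c : ℝ) :
    ∫ t in Icc (-a) a, g (r * t + c) ≤ ∫ t in Icc (-a) a, g (r * t) := by
  have hgr : ∀ x y, |x| ≤ |y| → g (r * y) ≤ g (r * x) := fun x y hxy =>
    hg _ _ (by rw [abs_mul, abs_mul]; gcongr)
  simpa only [mul_add, mul_div_cancel₀ _ hr] using
    setIntegral_Icc_comp_add_right_le (by fun_prop) hgr a (c / r)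

lemma integrable_prod_comp_mulVec (hg0 : ∀ x, 0 ≤ g x) {ι : Type*} [Fintype ι]
    (μ : ι → Measure ℝ) [∀ i, IsFiniteMeasure (μ i)] (R : Matrix ι ι ℝ) :
    Integrable (fun ξ => ∏ j, g ((R *ᵥ ξ) j)) (Measure.pi μ) := by
  refine .of_bound (by fun_prop : Continuous _).aestronglyMeasurable (g 0 ^ Fintype.card ι)
    (ae_of_all _ fun ξ => ?_)
  calc ‖∏ j, g ((R *ᵥ ξ) j)‖ = ∏ j, g ((R *ᵥ ξ) j) :=
        Real.norm_of_nonneg (Finset.prod_nonneg fun _ _ => hg0 _)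
    _ ≤ ∏ _j : ι, g 0 := Finset.prod_le_prod (fun _ _ => hg0 _) fun _ _ => hg _ _ (by simp)
    _ = g 0 ^ Fintype.card ι := Finset.prod_const _

theorem integral_pi_Icc_prod_comp_mulVec_le (hg0 : ∀ x, 0 ≤ g x) {n : ℕ}
    (R : Matrix (Fin n) (Fin n) ℝ) (hR : R.BlockTriangular id) (hdiag : ∀ i, R i i ≠ 0)
    (a : Fin n → ℝ) :
    ∫ ξ, ∏ j, g ((R *ᵥ ξ) j) ∂Measure.pi (fun i => volume.restrict (Icc (-a i) (a i)))
      ≤ ∏ i, ∫ t in Icc (-a i) (a i), g (R i i * t) := by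
  induction n with
  | zero => simp [measureReal_def]
  | succ n ih =>
    set ν := Measure.pi fun j : Fin n => volume.restrict (Icc (-a j.succ) (a j.succ))
    set G := fun y => ∏ j, g ((R.submatrix Fin.succ Fin.succ *ᵥ y) j)
    set I₀ := ∫ t in Icc (-a 0) (a 0), g (R 0 0 * t)
    have hG₀ : ∀ y, 0 ≤ G y := fun y => Finset.prod_nonneg fun _ _ => hg0 _
    have hfactor : ∀ x y, ∏ j, g ((R *ᵥ Fin.cons x y) j)
        = g (R 0 0 * x + ∑ k, R 0 k.succ * y k) * G y := fun x y => by
      rw [Fin.prod_univ_succ]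
      simp only [mulVec_cons_succ hR]
      simp [G, mulVec, dotProduct, Fin.sum_univ_succ]
    have hG : Integrable G ν := integrable_prod_comp_mulVec hg_cont hg hg0 _ _
    rw [integral_pi_eq_integral_integral_cons _ (integrable_prod_comp_mulVec hg_cont hg hg0 _ R),
      Fin.prod_univ_succ]
    calc ∫ y, ∫ x, ∏ j, g ((R *ᵥ Fin.cons x y) j) ∂volume.restrict (Icc (-a 0) (a 0)) ∂ν
        = ∫ y, (∫ x in Icc (-a 0) (a 0), g (R 0 0 * x + ∑ k, R 0 k.succ * y k)) * G y ∂ν := by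
          simp_rw [hfactor, MeasureTheory.integral_mul_const]
      _ ≤ ∫ y, I₀ * G y ∂ν := by
          refine integral_mono_of_nonneg (ae_of_all _ fun y => ?_) (hG.const_mul _)
            (ae_of_all _ fun y => ?_)
          · exact mul_nonneg (setIntegral_nonneg measurableSet_Icc fun _ _ => hg0 _) (hG₀ y)
          · exact mul_le_mul_of_nonneg_right
              (setIntegral_Icc_comp_mul_add_le hg_cont hg (hdiag 0) _ _) (hG₀ y)
      _ = I₀ * ∫ y, G y ∂ν := integral_const_mul _ _
      _ ≤ I₀ * ∏ i : Fin n, ∫ t in Icc (-a i.succ) (a i.succ), g (R i.succ i.succ * t) :=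
          mul_le_mul_of_nonneg_left
            (ih _ (fun i j h => hR (Fin.succ_lt_succ_iff.2 h)) (fun i => hdiag _) _)
            (setIntegral_nonneg measurableSet_Icc fun _ _ => hg0 _)

end RadiallyNonincreasing

lemma exp_neg_sq_div_le_of_abs_le {c x y : ℝ} (hc : 0 ≤ c) (h : |x| ≤ |y|) :
    Real.exp (-y ^ 2 / c) ≤ Real.exp (-x ^ 2 / c) :=
  Real.exp_le_exp.2 (div_le_div_of_nonneg_right (neg_le_neg (sq_le_sq.2 h)) hc)

theorem gaussian_integral_box_le_prod_general
    {n : ℕ}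
    (R : Matrix (Fin n) (Fin n) ℝ)
    (hupper : ∀ i j : Fin n, j < i → R i j = 0)
    (hdiag : ∀ i : Fin n, 0 < R i i)
    (σ : ℝ)
    (a : Fin n → ℝ) :
    (∫ ξ in Set.univ.pi (fun i => Set.Icc (-(a i)) (a i)),
        Real.exp (-(∑ j, ((R *ᵥ ξ) j) ^ 2) / (2 * σ ^ 2)))
      ≤ ∏ i, ∫ t in Set.Icc (-(a i)) (a i), Real.exp (-(R i i ^ 2 * t ^ 2) / (2 * σ ^ 2)) := by
  have key := integral_pi_Icc_prod_comp_mulVec_le (g := fun s => Real.exp (-s ^ 2 / (2 * σ ^ 2)))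
    (by fun_prop) (fun _ _ => exp_neg_sq_div_le_of_abs_le (by positivity))
    (fun _ => (Real.exp_pos _).le) R (fun i j h => hupper i j h) (fun i => (hdiag i).ne') a
  rw [volume_pi, Measure.restrict_pi_pi]
  simpa only [← Real.exp_sum, ← Finset.sum_div, Finset.sum_neg_distrib, mul_pow] using key

/-- The Gaussian-type integral over a centered box is bounded by the product of the
one-dimensional integrals with the diagonal entries of `R`. -/
theorem gaussian_integral_box_le_prod
    {n : ℕ} (hn : 1 ≤ n)
    (R : Matrix (Fin n) (Fin n) ℝ)
    (hupper : ∀ i j : Fin n, j < i → R i j = 0)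
    (hdiag : ∀ i : Fin n, 0 < R i i)
    (σ : ℝ) (hσ : 0 < σ)
    (a : Fin n → ℝ) (ha : ∀ i, 0 < a i) :
    (∫ ξ in Set.univ.pi (fun i => Set.Icc (-(a i)) (a i)),
        Real.exp (-(∑ j, ((R *ᵥ ξ) j) ^ 2) / (2 * σ ^ 2)))
      ≤ ∏ i, ∫ t in Set.Icc (-(a i)) (a i), Real.exp (-(R i i ^ 2 * t ^ 2) / (2 * σ ^ 2)) :=
  gaussian_integral_box_le_prod_general R hupper hdiag σ a
end

section
/- With σ = 1 and R = [[2, −1], [0, 1]], the success probability of the 2-dimensional box-constrained rounding detector at a corner parameter strictly exceeds that of the Babai detector: (1/π) · ∫_{−∞}^{1/2} ∫_{−∞}^{1/2} exp(−(1/2) ((2ξ_1 − ξ_2)² + ξ_2²)) dξ_1 dξ_2 > (1/4) · (1 + φ_1(1)) · (1 + φ_1(2)), where φ_1(ζ) = (2/√(2π)) ∫_0^{ζ/2} exp(−t²/2) dt. -/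
open MeasureTheory ProbabilityTheory Matrix
open scoped ENNReal NNReal

/-!
Write `g u = exp (-u²/2)` and `G s = ∫_{u ≤ s} g u`. Integrating out `ξ₁` turns the left side
into `(2π)⁻¹ ∫_{v ≤ 1/2} g v · G (1 - v)`, and `1 + φ₁(ζ) = 2 G(ζ/2)/√(2π)` turns the right side
into `(2π)⁻¹ G(1/2) G(1)`, so one must show `∫_{v ≤ 1/2} g v · (G (1 - v) - G 1) > 0`.
The integrand is nonnegative for `v ≤ 0`, and the range `v ≤ -1/2` alone contributes at least
`G(-1/2) (G(3/2) - G 1) ≥ (3/4) · (1/2) e^{-9/8}`. For `0 < v ≤ 1/2` it is at least `-e^{-1/4} v`,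
since `G 1 - G (1 - v) ≤ v g(1 - v)` and `g v · g (1 - v) ≤ e^{-1/4}`. The total is therefore at
least `e^{-9/8} (3 - e^{7/8}) / 8 > 0`.
-/

open Set Real

noncomputable def gaussKernel (u : ℝ) : ℝ := exp (-(u ^ 2) / 2)

/-- Unnormalized standard normal CDF: its total mass is `√(2π)`. -/
noncomputable def gaussCdf (s : ℝ) : ℝ := ∫ u in Iic s, gaussKernel u

lemma gaussKernel_eq (u : ℝ) : gaussKernel u = exp (-(1 / 2) * u ^ 2) := by
  rw [gaussKernel]; ring_nf

lemma gaussKernel_pos (u : ℝ) : 0 < gaussKernel u := exp_pos _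

lemma gaussKernel_le_one (u : ℝ) : gaussKernel u ≤ 1 :=
  exp_le_one_iff.mpr (by nlinarith [sq_nonneg u])

lemma gaussKernel_neg (u : ℝ) : gaussKernel (-u) = gaussKernel u := by
  simp [gaussKernel]

lemma integrable_gaussKernel : Integrable gaussKernel := by
  simpa only [← gaussKernel_eq] using integrable_exp_neg_mul_sq (b := 1 / 2) (by norm_num)

lemma gaussKernel_antitoneOn : AntitoneOn gaussKernel (Ici 0) := by
  intro x hx y _ hxy
  exact exp_le_exp.mpr (by simp only [mem_Ici] at hx; nlinarith)

lemma gaussKernel_mul_gaussKernel (x y : ℝ) :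
    gaussKernel x * gaussKernel y = exp (-(1 / 2) * (x ^ 2 + y ^ 2)) := by
  rw [gaussKernel, gaussKernel, ← exp_add]; ring_nf

lemma gaussCdf_nonneg (s : ℝ) : 0 ≤ gaussCdf s :=
  setIntegral_nonneg measurableSet_Iic fun u _ => (gaussKernel_pos u).le

lemma gaussCdf_le_integral (s : ℝ) : gaussCdf s ≤ ∫ u, gaussKernel u :=
  setIntegral_le_integral integrable_gaussKernel (.of_forall fun u => (gaussKernel_pos u).le)

lemma gaussCdf_mono : Monotone gaussCdf := fun _ _ hab =>
  setIntegral_mono_set integrable_gaussKernel.integrableOn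
    (.of_forall fun u => (gaussKernel_pos u).le) (Iic_subset_Iic.mpr hab).eventuallyLE

lemma gaussCdf_sub (a b : ℝ) : gaussCdf b - gaussCdf a = ∫ u in a..b, gaussKernel u := by
  rw [gaussCdf, gaussCdf, intervalIntegral.integral_Iic_sub_Iic
    integrable_gaussKernel.integrableOn integrable_gaussKernel.integrableOn]

lemma gaussCdf_zero : gaussCdf 0 = √(2 * π) / 2 := by
  calc gaussCdf 0 = ∫ u in Iic 0, gaussKernel (-u) := by simp only [gaussKernel_neg, gaussCdf]
    _ = ∫ u in Ioi 0, exp (-(1 / 2) * u ^ 2) := by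
      rw [integral_comp_neg_Iic (f := gaussKernel), neg_zero]; simp only [gaussKernel_eq]
    _ = √(2 * π) / 2 := by rw [integral_gaussian_Ioi, div_div_eq_mul_div, div_one, mul_comm]

lemma gaussCdf_sub_le_sub {a b : ℝ} (hab : a ≤ b) : gaussCdf b - gaussCdf a ≤ b - a := by
  rw [gaussCdf_sub]
  simpa using intervalIntegral.integral_mono_on hab integrable_gaussKernel.intervalIntegrable
    intervalIntegrable_const fun u _ => gaussKernel_le_one u

lemma gaussCdf_sub_le {a b : ℝ} (ha : 0 ≤ a) (hab : a ≤ b) :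
    gaussCdf b - gaussCdf a ≤ (b - a) * gaussKernel a := by
  rw [gaussCdf_sub]
  simpa using intervalIntegral.integral_mono_on hab integrable_gaussKernel.intervalIntegrable
    intervalIntegrable_const fun u hu =>
      gaussKernel_antitoneOn (mem_Ici.mpr ha) (mem_Ici.mpr (ha.trans hu.1)) hu.1

lemma le_gaussCdf_sub {a b : ℝ} (ha : 0 ≤ a) (hab : a ≤ b) :
    (b - a) * gaussKernel b ≤ gaussCdf b - gaussCdf a := by
  rw [gaussCdf_sub]
  simpa using intervalIntegral.integral_mono_on hab intervalIntegrable_const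
    integrable_gaussKernel.intervalIntegrable fun u hu =>
      gaussKernel_antitoneOn (mem_Ici.mpr (ha.trans hu.1)) (mem_Ici.mpr (ha.trans hab)) hu.2

lemma setIntegral_Iic_comp_mul_sub (f : ℝ → ℝ) {a : ℝ} (ha : 0 < a) (c v : ℝ) :
    ∫ x in Iic c, f (a * x - v) = a⁻¹ * ∫ u in Iic (a * c - v), f u := by
  set F := (Iic (a * c - v)).indicator f
  have hF : (Iic c).indicator (fun x => f (a * x - v)) = fun x => F (a * (x - v / a)) := by
    ext x
    have hx : a * (x - v / a) = a * x - v := by field_simp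
    simp only [F, hx, indicator_apply, mem_Iic, sub_le_sub_iff_right, mul_le_mul_iff_right₀ ha]
  rw [← integral_indicator measurableSet_Iic, ← integral_indicator measurableSet_Iic, hF,
    integral_sub_right_eq_self (fun x => F (a * x)), Measure.integral_comp_mul_left,
    abs_of_pos (inv_pos.mpr ha), smul_eq_mul]

lemma integrable_gaussKernel_mul_gaussCdf {φ : ℝ → ℝ} (hφ : Measurable φ) :
    Integrable fun v => gaussKernel v * gaussCdf (φ v) :=
  integrable_gaussKernel.mul_bdd (gaussCdf_mono.measurable.comp hφ).aestronglyMeasurable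
    (.of_forall fun v => by
      rw [Real.norm_of_nonneg (gaussCdf_nonneg _)]; exact gaussCdf_le_integral _)

lemma one_add_phi_one (ζ : ℝ) : 1 + phi 1 ζ = 2 / √(2 * π) * gaussCdf (ζ / 2) := by
  have hs : 0 < √(2 * π) := sqrt_pos.mpr (by positivity)
  have hphi : phi 1 ζ = 2 / √(2 * π) * (gaussCdf (ζ / 2) - gaussCdf 0) := by
    rw [phi, gaussCdf_sub, mul_one]; rfl
  rw [hphi, gaussCdf_zero]
  field_simp
  ring

lemma integral_Iic_exp_quadratic (v : ℝ) :
    ∫ x in Iic (1 / 2), exp (-(1 / 2) * ((2 * x - v) ^ 2 + v ^ 2)) =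
      2⁻¹ * (gaussKernel v * gaussCdf (1 - v)) := by
  simp_rw [← gaussKernel_mul_gaussKernel]
  rw [integral_mul_const, setIntegral_Iic_comp_mul_sub gaussKernel two_pos, gaussCdf]
  norm_num
  ring

lemma three_quarters_le_gaussCdf_neg_half : 3 / 4 ≤ gaussCdf (-(1 / 2)) := by
  have hs : 5 / 2 ≤ √(2 * π) := le_sqrt_of_sq_le (by nlinarith [pi_gt_d2])
  have := gaussCdf_sub_le_sub (a := -(1 / 2)) (b := 0) (by norm_num)
  rw [gaussCdf_zero] at this
  linarith

lemma integrable_gaussKernel_mul_gaussCdf_sub :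
    Integrable fun v => gaussKernel v * (gaussCdf (1 - v) - gaussCdf 1) := by
  simp_rw [mul_sub]
  exact (integrable_gaussKernel_mul_gaussCdf (by fun_prop)).sub
    (integrable_gaussKernel.mul_const _)

lemma le_setIntegral_Iic_zero_gaussKernel_mul_gaussCdf_sub :
    3 / 8 * gaussKernel (3 / 2) ≤
      ∫ v in Iic 0, gaussKernel v * (gaussCdf (1 - v) - gaussCdf 1) := by
  have hint := integrable_gaussKernel_mul_gaussCdf_sub.integrableOn (s := Iic 0)
  have hnonneg : ∀ v ∈ Iic (0 : ℝ), 0 ≤ gaussKernel v * (gaussCdf (1 - v) - gaussCdf 1) :=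
    fun v hv => mul_nonneg (gaussKernel_pos v).le
      (sub_nonneg.mpr (gaussCdf_mono (by simp only [mem_Iic] at hv; linarith)))
  have hstrip : 1 / 2 * gaussKernel (3 / 2) ≤ gaussCdf (3 / 2) - gaussCdf 1 := by
    have := le_gaussCdf_sub (a := 1) (b := 3 / 2) zero_le_one (by norm_num)
    norm_num at this ⊢; exact this
  calc 3 / 8 * gaussKernel (3 / 2)
      ≤ gaussCdf (-(1 / 2)) * (gaussCdf (3 / 2) - gaussCdf 1) := by
        nlinarith [three_quarters_le_gaussCdf_neg_half, (gaussKernel_pos (3 / 2)).le]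
    _ = ∫ v in Iic (-(1 / 2)), gaussKernel v * (gaussCdf (3 / 2) - gaussCdf 1) := by
        rw [integral_mul_const, gaussCdf]
    _ ≤ ∫ v in Iic (-(1 / 2)), gaussKernel v * (gaussCdf (1 - v) - gaussCdf 1) :=
        setIntegral_mono_on (integrable_gaussKernel.mul_const _).integrableOn
          integrable_gaussKernel_mul_gaussCdf_sub.integrableOn measurableSet_Iic
          fun v hv => mul_le_mul_of_nonneg_left
            (sub_le_sub_right (gaussCdf_mono (by simp only [mem_Iic] at hv; linarith)) _)
            (gaussKernel_pos v).le
    _ ≤ ∫ v in Iic 0, gaussKernel v * (gaussCdf (1 - v) - gaussCdf 1) :=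
        setIntegral_mono_set hint ((ae_restrict_iff' measurableSet_Iic).mpr (.of_forall hnonneg))
          (Iic_subset_Iic.mpr (by norm_num)).eventuallyLE

lemma le_setIntegral_Ioc_gaussKernel_mul_gaussCdf_sub :
    -(exp (-(1 / 4)) / 8) ≤
      ∫ v in Ioc 0 (1 / 2), gaussKernel v * (gaussCdf (1 - v) - gaussCdf 1) := by
  have hbound : ∀ v ∈ Ioc (0 : ℝ) (1 / 2),
      -(exp (-(1 / 4)) * v) ≤ gaussKernel v * (gaussCdf (1 - v) - gaussCdf 1) := by
    rintro v ⟨hv0, hv1⟩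
    have hstrip := gaussCdf_sub_le (a := 1 - v) (b := 1) (by linarith) (by linarith)
    have hpair : gaussKernel v * gaussKernel (1 - v) ≤ exp (-(1 / 4)) := by
      rw [gaussKernel_mul_gaussKernel, exp_le_exp]; nlinarith [sq_nonneg (v - 1 / 2)]
    nlinarith [gaussKernel_pos v]
  calc -(exp (-(1 / 4)) / 8) = ∫ v in Ioc 0 (1 / 2), -(exp (-(1 / 4)) * v) := by
        rw [← intervalIntegral.integral_of_le (by norm_num), intervalIntegral.integral_neg,
          intervalIntegral.integral_const_mul, integral_id]
        ring
    _ ≤ _ := setIntegral_mono_on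
          (by fun_prop : Continuous fun v : ℝ => -(exp (-(1 / 4)) * v)).integrableOn_Ioc
          integrable_gaussKernel_mul_gaussCdf_sub.integrableOn measurableSet_Ioc hbound

lemma gaussCdf_mul_gaussCdf_lt_integral :
    gaussCdf (1 / 2) * gaussCdf 1 < ∫ v in Iic (1 / 2), gaussKernel v * gaussCdf (1 - v) := by
  have hint := integrable_gaussKernel_mul_gaussCdf_sub
  have hsplit : ∫ v in Iic (1 / 2), gaussKernel v * (gaussCdf (1 - v) - gaussCdf 1) =
      (∫ v in Iic 0, gaussKernel v * (gaussCdf (1 - v) - gaussCdf 1)) +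
        ∫ v in Ioc 0 (1 / 2), gaussKernel v * (gaussCdf (1 - v) - gaussCdf 1) := by
    rw [← Iic_union_Ioc_eq_Iic (by norm_num : (0 : ℝ) ≤ 1 / 2),
      setIntegral_union (Iic_disjoint_Ioc le_rfl) measurableSet_Ioc hint.integrableOn
        hint.integrableOn]
  have hdiff : ∫ v in Iic (1 / 2), gaussKernel v * (gaussCdf (1 - v) - gaussCdf 1) =
      (∫ v in Iic (1 / 2), gaussKernel v * gaussCdf (1 - v)) - gaussCdf (1 / 2) * gaussCdf 1 := by
    simp_rw [mul_sub]
    rw [integral_sub (integrable_gaussKernel_mul_gaussCdf (by fun_prop)).integrableOn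
      (integrable_gaussKernel.mul_const _).integrableOn, integral_mul_const]
    rfl
  have hexp : exp (-(1 / 4)) < 3 * gaussKernel (3 / 2) := by
    have h78 : exp (7 / 8) < 3 := by
      linarith [exp_le_exp.mpr (by norm_num : (7 / 8 : ℝ) ≤ 1), exp_one_lt_d9]
    have : exp (-(1 / 4)) = exp (7 / 8) * gaussKernel (3 / 2) := by
      rw [gaussKernel, ← exp_add]; norm_num
    rw [this]
    exact mul_lt_mul_of_pos_right h78 (gaussKernel_pos _)
  linarith [le_setIntegral_Iic_zero_gaussKernel_mul_gaussCdf_sub,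
    le_setIntegral_Ioc_gaussKernel_mul_gaussCdf_sub]

/-- Example 1 of the paper: with `σ = 1` and `R = [[2, -1], [0, 1]]`, at a corner parameter
the rounding success probability strictly exceeds the Babai success probability. -/
theorem example_rounding_gt_babai :
    (1 / Real.pi) *
        ∫ ξ₂ in Set.Iic (1 / 2 : ℝ), ∫ ξ₁ in Set.Iic (1 / 2 : ℝ),
          Real.exp (-(1 / 2) * ((2 * ξ₁ - ξ₂) ^ 2 + ξ₂ ^ 2))
      > 1 / 4 * (1 + phi 1 1) * (1 + phi 1 2) := by
  have hs : √(2 * π) ^ 2 = 2 * π := sq_sqrt (by positivity)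
  have hlhs : (1 / π) * ∫ ξ₂ in Iic (1 / 2 : ℝ), ∫ ξ₁ in Iic (1 / 2 : ℝ),
        exp (-(1 / 2) * ((2 * ξ₁ - ξ₂) ^ 2 + ξ₂ ^ 2)) =
      (2 * π)⁻¹ * ∫ v in Iic (1 / 2), gaussKernel v * gaussCdf (1 - v) := by
    simp_rw [integral_Iic_exp_quadratic, integral_const_mul]
    field_simp
  have hrhs : 1 / 4 * (1 + phi 1 1) * (1 + phi 1 2) =
      (2 * π)⁻¹ * (gaussCdf (1 / 2) * gaussCdf 1) := by
    rw [one_add_phi_one, one_add_phi_one, div_self two_ne_zero]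
    field_simp
    rw [hs]
    ring
  rw [gt_iff_lt, hlhs, hrhs]
  exact mul_lt_mul_of_pos_left gaussCdf_mul_gaussCdf_lt_integral (by positivity)
end
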